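/- A point V* = (V*_1, …, V*_N) ∈ ℝ^N is an equilibrium of the volume-scavenging system (i.e. Σ_{i=1}^N c_{i,j} Δ_s(P(V*_i) − P(V*_j)) = 0 for every 1 ≤ j ≤ N) if and only if P(V*_i) = P(V*_j) for all 1 ≤ i, j ≤ N. -/

import Mathlib

/-!
At an equilibrium, look at a vertex `a` where `j ↦ P(V*_j)` is maximal. Every term
`c i a * Δ_s(P(V*_i) - P(V*_a))` of the equation at `a` is `≤ 0`, so all vanish; as `Δ_s`
vanishes only at `0`, every neighbour of `a` is again a maximum. By connectedness the
maximum spreads to all vertices, so `P(V*)` is constant.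
-/

/-- Droplet volume as a function of height: v(h) = h(h²+3)/4. -/
noncomputable def vol (h : ℝ) : ℝ := h * (h ^ 2 + 3) / 4

/-- Droplet pressure as a function of height: p(h) = 4h/(h²+1). -/
noncomputable def pres (h : ℝ) : ℝ := 4 * h / (h ^ 2 + 1)

/-- Pressure as a function of volume: P(V) = p(h) where v(h) = V
(v is a strictly increasing bijection of ℝ, so its inverse is well defined). -/
noncomputable def Pfun (V : ℝ) : ℝ := pres (Function.invFun vol V)

/-- Δ_s(x) = |x|^s sgn(x). -/
noncomputable def Ds (s x : ℝ) : ℝ := |x| ^ s * Real.sign x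

lemma Ds_zero (s : ℝ) : Ds s 0 = 0 := by
  simp [Ds]

lemma Real.sign_nonpos {x : ℝ} (hx : x ≤ 0) : Real.sign x ≤ 0 := by
  rcases hx.lt_or_eq with hneg | rfl
  · simp [Real.sign_of_neg hneg]
  · simp

lemma Ds_nonpos {s x : ℝ} (hx : x ≤ 0) : Ds s x ≤ 0 :=
  mul_nonpos_of_nonneg_of_nonpos (Real.rpow_nonneg (abs_nonneg x) s) (Real.sign_nonpos hx)

lemma Ds_eq_zero_iff {s x : ℝ} (hs : 0 < s) : Ds s x = 0 ↔ x = 0 := by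
  simp [Ds, Real.rpow_eq_zero (abs_nonneg x) hs.ne', Real.sign_eq_zero_iff]

theorem SimpleGraph.Reachable.of_forall_adj_imp {V : Type*} {G : SimpleGraph V} {u v : V}
    {p : V → Prop} (h : G.Reachable u v) (hp : ∀ a b, G.Adj a b → p a → p b) (hu : p u) :
    p v := by
  obtain ⟨w⟩ := h
  induction w with
  | nil => exact hu
  | cons hadj _ ih => exact ih (hp _ _ hadj hu)

section MaximumPrinciple

variable {ι : Type*} [Fintype ι] {c : ι → ι → ℝ} {φ : ℝ → ℝ} {f : ι → ℝ}

lemma eq_of_sum_mul_sub_eq_zero_of_isMax (hc : ∀ i j, 0 ≤ c i j)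
    (hφ : ∀ x ≤ 0, φ x ≤ 0) (hφ_eq_zero : ∀ x, φ x = 0 → x = 0) {a b : ι}
    (hmax : ∀ i, f i ≤ f a) (hsum : ∑ i, c i a * φ (f i - f a) = 0) (hba : 0 < c b a) :
    f b = f a := by
  have hterm : ∀ i ∈ Finset.univ, c i a * φ (f i - f a) ≤ 0 := fun i _ =>
    mul_nonpos_of_nonneg_of_nonpos (hc i a) (hφ _ (sub_nonpos.2 (hmax i)))
  have hb := (Finset.sum_eq_zero_iff_of_nonpos hterm).1 hsum b (Finset.mem_univ b)
  rw [mul_eq_zero, or_iff_right hba.ne'] at hb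
  exact sub_eq_zero.1 (hφ_eq_zero _ hb)

theorem eq_of_forall_sum_mul_sub_eq_zero (hsymm : ∀ i j, c i j = c j i) (hc : ∀ i j, 0 ≤ c i j)
    (hφ : ∀ x ≤ 0, φ x ≤ 0) (hφ_eq_zero : ∀ x, φ x = 0 → x = 0)
    (hconn : (SimpleGraph.fromRel fun i j => 0 < c i j).Connected)
    (h : ∀ j, ∑ i, c i j * φ (f i - f j) = 0) (i j : ι) : f i = f j := by
  have := hconn.nonempty
  obtain ⟨a, hmax⟩ := Finite.exists_max f
  have hspread : ∀ x y, (SimpleGraph.fromRel fun i j => 0 < c i j).Adj x y →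
      f x = f a → f y = f a := by
    intro x y hxy hx
    have hyx : 0 < c y x :=
      ((SimpleGraph.fromRel_adj _ _ _).1 hxy).2.elim (fun h => hsymm x y ▸ h) id
    rw [← hx] at hmax ⊢
    exact eq_of_sum_mul_sub_eq_zero_of_isMax hc hφ hφ_eq_zero hmax (h x) hyx
  have hconst : ∀ k, f k = f a := fun k => (hconn a k).of_forall_adj_imp hspread rfl
  rw [hconst i, hconst j]

end MaximumPrinciple

theorem stmt7_general (N : ℕ) (s : ℝ) (hs : 0 < s)
    (c : Fin N → Fin N → ℝ)
    (hsymm : ∀ i j, c i j = c j i)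
    (hnonneg : ∀ i j, 0 ≤ c i j)
    (hconn : (SimpleGraph.fromRel (fun i j => 0 < c i j)).Connected)
    (Vstar : Fin N → ℝ) :
    (∀ j, ∑ i, c i j * Ds s (Pfun (Vstar i) - Pfun (Vstar j)) = 0) ↔
      ∀ i j, Pfun (Vstar i) = Pfun (Vstar j) := by
  refine ⟨fun h => eq_of_forall_sum_mul_sub_eq_zero hsymm hnonneg (fun _ => Ds_nonpos)
    (fun _ => (Ds_eq_zero_iff hs).1) hconn h, fun h j => ?_⟩
  exact Finset.sum_eq_zero fun i _ => by rw [h i j, sub_self, Ds_zero, mul_zero]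

theorem stmt7 (N : ℕ) (hN : 2 ≤ N) (s : ℝ) (hs : 0 < s)
    (c : Fin N → Fin N → ℝ)
    (hsymm : ∀ i j, c i j = c j i)
    (hnonneg : ∀ i j, 0 ≤ c i j)
    (hdiag : ∀ i, c i i = 0)
    (hconn : (SimpleGraph.fromRel (fun i j => 0 < c i j)).Connected)
    (Vstar : Fin N → ℝ) :
    (∀ j, ∑ i, c i j * Ds s (Pfun (Vstar i) - Pfun (Vstar j)) = 0) ↔
      ∀ i j, Pfun (Vstar i) = Pfun (Vstar j) :=
  stmt7_general N s hs c hsymm hnonneg hconn Vstar
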